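/- arXiv:1309.5376 — 2 statements merged into one kernel-verified Lean document; each statement's English description precedes it below -/
import Mathlib

section
/- Vertex-Splitting Lemma: Let G be a graph, v a vertex of G with neighbor set N(v), and let N(v) = H ∪ K be a disjoint union. Let G' be the graph obtained from G by deleting v and adding three new vertices v', v'', x with N(v') = H ∪ {x}, N(v'') = K ∪ {x}, and N(x) = {v', v''}. Then G and G' have the same number of perfect matchings. -/
open scoped Classical

/-- The number of perfect matchings of a graph. -/
noncomputable def numPM {V : Type*} (G : SimpleGraph V) : ℕ :=
  Set.ncard {M : G.Subgraph | M.IsPerfectMatching}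

/-- The graph obtained from `G` by splitting the vertex `v` according to the partition
`N(v) = H ∪ K`: delete `v` and add three new vertices `v' = inr 0`, `v'' = inr 1`,
`x = inr 2` with `N(v') = H ∪ {x}`, `N(v'') = K ∪ {x}`, `N(x) = {v', v''}`. -/
def vertexSplit {V : Type*} (G : SimpleGraph V) (v : V) (H K : Set V) :
    SimpleGraph ({u : V // u ≠ v} ⊕ Fin 3) :=
  SimpleGraph.fromRel fun a b =>
    match a, b with
    | .inl u, .inl w => G.Adj u.1 w.1
    | .inl u, .inr i => (u.1 ∈ H ∧ i = 0) ∨ (u.1 ∈ K ∧ i = 1)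
    | .inr i, .inr j => i = 2 ∧ (j = 0 ∨ j = 1)
    | _, _ => False

namespace VSplit
variable {V : Type*} {G : SimpleGraph V} {v : V} {H K : Set V}

lemma adj_ll {u w : {u : V // u ≠ v}} :
    (vertexSplit G v H K).Adj (.inl u) (.inl w) ↔ G.Adj u.1 w.1 := by
  constructor
  · rintro ⟨-, h | h⟩
    exacts [h, h.symm]
  · intro h
    refine ⟨?_, Or.inl h⟩
    simp only [ne_eq, Sum.inl.injEq]
    intro e
    exact G.ne_of_adj h (by rw [e])

lemma adj_lr {u : {u : V // u ≠ v}} {i : Fin 3} :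
    (vertexSplit G v H K).Adj (.inl u) (.inr i) ↔ (u.1 ∈ H ∧ i = 0) ∨ (u.1 ∈ K ∧ i = 1) := by
  constructor
  · rintro ⟨-, h | h⟩
    exacts [h, h.elim]
  · intro h
    exact ⟨by simp, Or.inl h⟩

lemma adj_rr {i j : Fin 3} :
    (vertexSplit G v H K).Adj (.inr i) (.inr j) ↔
      i ≠ j ∧ ((i = 2 ∧ (j = 0 ∨ j = 1)) ∨ (j = 2 ∧ (i = 0 ∨ i = 1))) := by
  constructor
  · rintro ⟨hne, h | h⟩
    · exact ⟨fun e => hne (by rw [e]), Or.inl h⟩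
    · exact ⟨fun e => hne (by rw [e]), Or.inr h⟩
  · rintro ⟨hne, h | h⟩
    · exact ⟨by simpa using hne, Or.inl h⟩
    · exact ⟨by simpa using hne, Or.inr h⟩

lemma adj_rl {u : {u : V // u ≠ v}} {i : Fin 3} :
    (vertexSplit G v H K).Adj (.inr i) (.inl u) ↔ (u.1 ∈ H ∧ i = 0) ∨ (u.1 ∈ K ∧ i = 1) := by
  rw [(vertexSplit G v H K).adj_comm]; exact adj_lr

/-- Forward adjacency. -/
def fwdAdj (M : G.Subgraph) (v : V) (H K : Set V) :
    ({u : V // u ≠ v} ⊕ Fin 3) → ({u : V // u ≠ v} ⊕ Fin 3) → Prop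
  | .inl u, .inl w => M.Adj u.1 w.1
  | .inl u, .inr i => M.Adj u.1 v ∧ ((u.1 ∈ H ∧ i = 0) ∨ (u.1 ∈ K ∧ i = 1))
  | .inr i, .inl u => M.Adj u.1 v ∧ ((u.1 ∈ H ∧ i = 0) ∨ (u.1 ∈ K ∧ i = 1))
  | .inr i, .inr j => ((∃ u ∈ H, M.Adj v u) ∧ ((i = 2 ∧ j = 1) ∨ (i = 1 ∧ j = 2))) ∨
      ((∃ u ∈ K, M.Adj v u) ∧ ((i = 2 ∧ j = 0) ∨ (i = 0 ∧ j = 2)))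

@[simp] lemma fwdAdj_ll (M : G.Subgraph) (u w : {u : V // u ≠ v}) :
    fwdAdj M v H K (.inl u) (.inl w) ↔ M.Adj u.1 w.1 := Iff.rfl
@[simp] lemma fwdAdj_lr (M : G.Subgraph) (u : {u : V // u ≠ v}) (i : Fin 3) :
    fwdAdj M v H K (.inl u) (.inr i) ↔
      M.Adj u.1 v ∧ ((u.1 ∈ H ∧ i = 0) ∨ (u.1 ∈ K ∧ i = 1)) := Iff.rfl
@[simp] lemma fwdAdj_rl (M : G.Subgraph) (u : {u : V // u ≠ v}) (i : Fin 3) :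
    fwdAdj M v H K (.inr i) (.inl u) ↔
      M.Adj u.1 v ∧ ((u.1 ∈ H ∧ i = 0) ∨ (u.1 ∈ K ∧ i = 1)) := Iff.rfl
@[simp] lemma fwdAdj_rr (M : G.Subgraph) (i j : Fin 3) :
    fwdAdj M v H K (.inr i) (.inr j) ↔
      ((∃ u ∈ H, M.Adj v u) ∧ ((i = 2 ∧ j = 1) ∨ (i = 1 ∧ j = 2))) ∨
      ((∃ u ∈ K, M.Adj v u) ∧ ((i = 2 ∧ j = 0) ∨ (i = 0 ∧ j = 2))) := Iff.rfl

def fwd (M : G.Subgraph) : (vertexSplit G v H K).Subgraph where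
  verts := Set.univ
  Adj := fwdAdj M v H K
  adj_sub := by
    rintro (u | i) (w | j) h
    · exact adj_ll.mpr (M.adj_sub h)
    · exact adj_lr.mpr h.2
    · exact adj_rl.mpr h.2
    · rcases h with ⟨-, (⟨rfl, rfl⟩ | ⟨rfl, rfl⟩)⟩ | ⟨-, (⟨rfl, rfl⟩ | ⟨rfl, rfl⟩)⟩ <;>
        exact adj_rr.mpr (by decide)
  edge_vert := fun _ => Set.mem_univ _
  symm.symm := by
    rintro (u | i) (w | j) h
    · exact M.adj_symm h
    · exact h
    · exact h
    · rcases h with ⟨he, hp⟩ | ⟨he, hp⟩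
      · exact Or.inl ⟨he, by tauto⟩
      · exact Or.inr ⟨he, by tauto⟩

/-- Backward adjacency. -/
def bwdAdj (M' : (vertexSplit G v H K).Subgraph) (a b : V) : Prop :=
  (∃ (ha : a ≠ v) (hb : b ≠ v), M'.Adj (.inl ⟨a, ha⟩) (.inl ⟨b, hb⟩)) ∨
  (a = v ∧ ∃ (hb : b ≠ v), M'.Adj (.inl ⟨b, hb⟩) (.inr 0) ∨ M'.Adj (.inl ⟨b, hb⟩) (.inr 1)) ∨
  (b = v ∧ ∃ (ha : a ≠ v), M'.Adj (.inl ⟨a, ha⟩) (.inr 0) ∨ M'.Adj (.inl ⟨a, ha⟩) (.inr 1))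

def bwd (hunion : H ∪ K = G.neighborSet v) (M' : (vertexSplit G v H K).Subgraph) :
    G.Subgraph where
  verts := Set.univ
  Adj := bwdAdj M'
  adj_sub := by
    rintro a b (⟨ha, hb, h⟩ | ⟨heq, hb, h⟩ | ⟨heq, ha, h⟩)
    · exact adj_ll.mp (M'.adj_sub h)
    · rw [heq]
      have : b ∈ H ∪ K := by
        rcases h with h | h
        · rcases adj_lr.mp (M'.adj_sub h) with ⟨h1, -⟩ | ⟨-, h1⟩
          · exact Or.inl h1
          · exact absurd h1 (by decide)
        · rcases adj_lr.mp (M'.adj_sub h) with ⟨-, h1⟩ | ⟨h1, -⟩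
          · exact absurd h1 (by decide)
          · exact Or.inr h1
      rw [hunion] at this
      exact this
    · rw [heq]
      have : a ∈ H ∪ K := by
        rcases h with h | h
        · rcases adj_lr.mp (M'.adj_sub h) with ⟨h1, -⟩ | ⟨-, h1⟩
          · exact Or.inl h1
          · exact absurd h1 (by decide)
        · rcases adj_lr.mp (M'.adj_sub h) with ⟨-, h1⟩ | ⟨h1, -⟩
          · exact absurd h1 (by decide)
          · exact Or.inr h1
      rw [hunion] at this
      exact (this : G.Adj v a).symm
  edge_vert := fun _ => Set.mem_univ _
  symm.symm := by
    rintro a b (⟨ha, hb, h⟩ | ⟨heq, hb, h⟩ | ⟨heq, ha, h⟩)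
    · exact Or.inl ⟨hb, ha, M'.adj_symm h⟩
    · exact Or.inr (Or.inr ⟨heq, hb, h⟩)
    · exact Or.inr (Or.inl ⟨heq, ha, h⟩)


lemma fwd_pm (hdisj : Disjoint H K) (hunion : H ∪ K = G.neighborSet v)
    {M : G.Subgraph} (hM : M.IsPerfectMatching) :
    (fwd (v := v) (H := H) (K := K) M).IsPerfectMatching := by
  constructor
  · rintro (u | i) -
    · -- vertex inl u
      obtain ⟨w, hw, hu⟩ := hM.1 (hM.2 u.1)
      by_cases hwv : w = v
      · subst hwv
        have humem : u.1 ∈ H ∪ K := by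
          rw [hunion]
          exact (M.adj_sub hw).symm
        rcases humem with hmem | hmem
        · refine ⟨.inr 0, ⟨hw, Or.inl ⟨hmem, rfl⟩⟩, ?_⟩
          rintro (w' | j) hadj
          · exact absurd (hu w'.1 hadj) w'.2
          · rcases hadj.2 with ⟨-, rfl⟩ | ⟨h1, rfl⟩
            · rfl
            · exact absurd hmem (fun hh => hdisj.ne_of_mem hh h1 rfl)
        · refine ⟨.inr 1, ⟨hw, Or.inr ⟨hmem, rfl⟩⟩, ?_⟩
          rintro (w' | j) hadj
          · exact absurd (hu w'.1 hadj) w'.2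
          · rcases hadj.2 with ⟨h1, rfl⟩ | ⟨-, rfl⟩
            · exact absurd hmem (fun hh => hdisj.ne_of_mem h1 hh rfl)
            · rfl
      · refine ⟨.inl ⟨w, hwv⟩, hw, ?_⟩
        rintro (w' | j) hadj
        · exact congrArg Sum.inl (Subtype.ext (hu w'.1 hadj))
        · exact absurd (hu v hadj.1) (Ne.symm hwv)
    · -- vertex inr i
      obtain ⟨w0, hw0, hu0⟩ := hM.1 (hM.2 v)
      have hw0v : w0 ≠ v := fun e => G.irrefl (e ▸ M.adj_sub hw0)
      have hw0mem : w0 ∈ H ∪ K := by rw [hunion]; exact M.adj_sub hw0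
      rcases hw0mem with hmem | hmem
      · have hexH : ∃ u ∈ H, M.Adj v u := ⟨w0, hmem, hw0⟩
        have hnexK : ¬ ∃ u ∈ K, M.Adj v u := by
          rintro ⟨u, huK, hadj⟩
          rw [hu0 u hadj] at huK
          exact hdisj.ne_of_mem hmem huK rfl
        fin_cases i
        · refine ⟨.inl ⟨w0, hw0v⟩, ⟨hw0.symm, Or.inl ⟨hmem, rfl⟩⟩, ?_⟩
          rintro (w' | j) hadj
          · rcases hadj with ⟨h1, ⟨-, -⟩ | ⟨-, h2⟩⟩
            · exact congrArg Sum.inl (Subtype.ext (hu0 w'.1 h1.symm))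
            · exact absurd h2 (by decide)
          · rcases hadj with ⟨-, ⟨h2, -⟩ | ⟨h2, -⟩⟩ | ⟨hK, -⟩
            · exact absurd h2 (by decide)
            · exact absurd h2 (by decide)
            · exact absurd hK hnexK
        · refine ⟨.inr 2, Or.inl ⟨hexH, Or.inr ⟨rfl, rfl⟩⟩, ?_⟩
          rintro (w' | j) hadj
          · rcases hadj with ⟨h1, ⟨-, h2⟩ | ⟨h2, -⟩⟩
            · exact absurd h2 (by decide)
            · rw [hu0 w'.1 h1.symm] at h2
              exact absurd h2 (fun hh => hdisj.ne_of_mem hmem hh rfl)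
          · rcases hadj with ⟨-, ⟨h2, -⟩ | ⟨-, rfl⟩⟩ | ⟨hK, -⟩
            · exact absurd h2 (by decide)
            · rfl
            · exact absurd hK hnexK
        · refine ⟨.inr 1, Or.inl ⟨hexH, Or.inl ⟨rfl, rfl⟩⟩, ?_⟩
          rintro (w' | j) hadj
          · rcases hadj with ⟨h1, ⟨-, h2⟩ | ⟨-, h2⟩⟩
            · exact absurd h2 (by decide)
            · exact absurd h2 (by decide)
          · rcases hadj with ⟨-, ⟨-, rfl⟩ | ⟨h2, -⟩⟩ | ⟨hK, -⟩
            · rfl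
            · exact absurd h2 (by decide)
            · exact absurd hK hnexK
      · have hexK : ∃ u ∈ K, M.Adj v u := ⟨w0, hmem, hw0⟩
        have hnexH : ¬ ∃ u ∈ H, M.Adj v u := by
          rintro ⟨u, huH, hadj⟩
          rw [hu0 u hadj] at huH
          exact hdisj.ne_of_mem huH hmem rfl
        fin_cases i
        · refine ⟨.inr 2, Or.inr ⟨hexK, Or.inr ⟨rfl, rfl⟩⟩, ?_⟩
          rintro (w' | j) hadj
          · rcases hadj with ⟨h1, ⟨h2, -⟩ | ⟨-, h2⟩⟩
            · rw [hu0 w'.1 h1.symm] at h2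
              exact absurd h2 (fun hh => hdisj.ne_of_mem hh hmem rfl)
            · exact absurd h2 (by decide)
          · rcases hadj with ⟨hH, -⟩ | ⟨-, ⟨h2, -⟩ | ⟨-, rfl⟩⟩
            · exact absurd hH hnexH
            · exact absurd h2 (by decide)
            · rfl
        · refine ⟨.inl ⟨w0, hw0v⟩, ⟨hw0.symm, Or.inr ⟨hmem, rfl⟩⟩, ?_⟩
          rintro (w' | j) hadj
          · rcases hadj with ⟨h1, ⟨-, h2⟩ | ⟨-, -⟩⟩
            · exact absurd h2 (by decide)
            · exact congrArg Sum.inl (Subtype.ext (hu0 w'.1 h1.symm))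
          · rcases hadj with ⟨hH, -⟩ | ⟨-, ⟨h2, -⟩ | ⟨h2, -⟩⟩
            · exact absurd hH hnexH
            · exact absurd h2 (by decide)
            · exact absurd h2 (by decide)
        · refine ⟨.inr 0, Or.inr ⟨hexK, Or.inl ⟨rfl, rfl⟩⟩, ?_⟩
          rintro (w' | j) hadj
          · rcases hadj with ⟨h1, ⟨-, h2⟩ | ⟨-, h2⟩⟩
            · exact absurd h2 (by decide)
            · exact absurd h2 (by decide)
          · rcases hadj with ⟨hH, -⟩ | ⟨-, ⟨-, rfl⟩ | ⟨h2, -⟩⟩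
            · exact absurd hH hnexH
            · rfl
            · exact absurd h2 (by decide)
  · intro a
    exact Set.mem_univ _


lemma bwd_pm (hdisj : Disjoint H K) (hunion : H ∪ K = G.neighborSet v)
    {M' : (vertexSplit G v H K).Subgraph} (hM' : M'.IsPerfectMatching) :
    (bwd hunion M').IsPerfectMatching := by
  constructor
  · rintro a -
    by_cases ha : a = v
    · subst ha
      obtain ⟨b2, hb2, hu2⟩ := hM'.1 (hM'.2 (.inr 2))
      have hb2cases : b2 = .inr 0 ∨ b2 = .inr 1 := by
        rcases b2 with u | c
        · rcases adj_rl.mp (M'.adj_sub hb2) with ⟨-, h⟩ | ⟨-, h⟩ <;> exact absurd h (by decide)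
        · rcases adj_rr.mp (M'.adj_sub hb2) with ⟨hne, ⟨-, (rfl | rfl)⟩ | ⟨h, -⟩⟩
          · exact Or.inl rfl
          · exact Or.inr rfl
          · exact absurd h.symm hne
      rcases hb2cases with rfl | rfl
      · -- x matched to v' = inr 0, so v'' = inr 1 is matched to some u ∈ K
        obtain ⟨b0, hb0, hu0⟩ := hM'.1 (hM'.2 (.inr 0))
        obtain ⟨b1, hb1, hu1⟩ := hM'.1 (hM'.2 (.inr 1))
        have hb1l : ∃ u : {u : V // u ≠ a}, b1 = .inl u ∧ u.1 ∈ K := by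
          rcases b1 with u | j
          · rcases adj_rl.mp (M'.adj_sub hb1) with ⟨-, h⟩ | ⟨hK, -⟩
            · exact absurd h (by decide)
            · exact ⟨u, rfl, hK⟩
          · rcases adj_rr.mp (M'.adj_sub hb1) with ⟨hne, ⟨h, -⟩ | ⟨rfl, -⟩⟩
            · exact absurd h (by decide)
            · exact absurd (hu2 (.inr 1) (M'.adj_symm hb1)) (by simp)
        obtain ⟨u, rfl, -⟩ := hb1l
        have hb0e : b0 = .inr 2 := (hu0 (.inr 2) (M'.adj_symm hb2)).symm
        refine ⟨u.1, Or.inr (Or.inl ⟨rfl, u.2, Or.inr (M'.adj_symm hb1)⟩), ?_⟩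
        rintro y (⟨hy, -, -⟩ | ⟨-, hy, h0 | h1⟩ | ⟨heq, hy, -⟩)
        · exact absurd rfl hy
        · have := (hu0 _ (M'.adj_symm h0)).trans hb0e
          exact absurd this (by simp)
        · exact congrArg Subtype.val (Sum.inl_injective (hu1 _ (M'.adj_symm h1)))
        · exact absurd rfl hy
      · -- x matched to v'' = inr 1, so v' = inr 0 is matched to some u ∈ H
        obtain ⟨b0, hb0, hu0⟩ := hM'.1 (hM'.2 (.inr 0))
        obtain ⟨b1, hb1, hu1⟩ := hM'.1 (hM'.2 (.inr 1))
        have hb0l : ∃ u : {u : V // u ≠ a}, b0 = .inl u ∧ u.1 ∈ H := by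
          rcases b0 with u | j
          · rcases adj_rl.mp (M'.adj_sub hb0) with ⟨hH, -⟩ | ⟨-, h⟩
            · exact ⟨u, rfl, hH⟩
            · exact absurd h (by decide)
          · rcases adj_rr.mp (M'.adj_sub hb0) with ⟨hne, ⟨h, -⟩ | ⟨rfl, -⟩⟩
            · exact absurd h (by decide)
            · exact absurd (hu2 (.inr 0) (M'.adj_symm hb0)) (by simp)
        obtain ⟨u, rfl, -⟩ := hb0l
        have hb1e : b1 = .inr 2 := (hu1 (.inr 2) (M'.adj_symm hb2)).symm
        refine ⟨u.1, Or.inr (Or.inl ⟨rfl, u.2, Or.inl (M'.adj_symm hb0)⟩), ?_⟩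
        rintro y (⟨hy, -, -⟩ | ⟨-, hy, h0 | h1⟩ | ⟨heq, hy, -⟩)
        · exact absurd rfl hy
        · exact congrArg Subtype.val (Sum.inl_injective (hu0 _ (M'.adj_symm h0)))
        · have := (hu1 _ (M'.adj_symm h1)).trans hb1e
          exact absurd this (by simp)
        · exact absurd rfl hy
    · obtain ⟨b, hb, hub⟩ := hM'.1 (hM'.2 (.inl ⟨a, ha⟩))
      rcases b with w | i
      · refine ⟨w.1, Or.inl ⟨ha, w.2, hb⟩, ?_⟩
        rintro y (⟨ha', hy, h⟩ | ⟨heq, -, -⟩ | ⟨heq, ha', h0 | h1⟩)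
        · exact congrArg Subtype.val (Sum.inl_injective (hub _ h))
        · exact absurd heq ha
        · exact absurd (hub _ h0) (by simp)
        · exact absurd (hub _ h1) (by simp)
      · have hi : M'.Adj (.inl ⟨a, ha⟩) (.inr 0) ∨ M'.Adj (.inl ⟨a, ha⟩) (.inr 1) := by
          rcases adj_lr.mp (M'.adj_sub hb) with ⟨-, rfl⟩ | ⟨-, rfl⟩
          · exact Or.inl hb
          · exact Or.inr hb
        refine ⟨v, Or.inr (Or.inr ⟨rfl, ha, hi⟩), ?_⟩
        rintro y (⟨ha', hy, h⟩ | ⟨heq, -, -⟩ | ⟨heq, -, -⟩)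
        · exact absurd (hub _ h) (by simp)
        · exact absurd heq ha
        · exact heq
  · intro a
    exact Set.mem_univ _


lemma bwd_fwd (hunion : H ∪ K = G.neighborSet v) {M : G.Subgraph}
    (hM : M.IsPerfectMatching) : bwd hunion (fwd (v := v) (H := H) (K := K) M) = M := by
  ext a b
  · simp only [bwd, fwd]
    exact ⟨fun _ => hM.2 a, fun _ => Set.mem_univ a⟩
  · constructor
    · rintro (⟨ha, hb, h⟩ | ⟨heq, hb, h0 | h1⟩ | ⟨heq, ha, h0 | h1⟩)
      · exact h
      · rw [heq]; exact h0.1.symm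
      · rw [heq]; exact h1.1.symm
      · rw [heq]; exact h0.1
      · rw [heq]; exact h1.1
    · intro h
      by_cases ha : a = v
      · subst ha
        have hb : b ≠ a := fun e => G.irrefl (e ▸ M.adj_sub h)
        have hbmem : b ∈ H ∪ K := by rw [hunion]; exact M.adj_sub h
        rcases hbmem with hmem | hmem
        · exact Or.inr (Or.inl ⟨rfl, hb, Or.inl ⟨h.symm, Or.inl ⟨hmem, rfl⟩⟩⟩)
        · exact Or.inr (Or.inl ⟨rfl, hb, Or.inr ⟨h.symm, Or.inr ⟨hmem, rfl⟩⟩⟩)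
      · by_cases hb : b = v
        · subst hb
          have hamem : a ∈ H ∪ K := by rw [hunion]; exact (M.adj_sub h).symm
          rcases hamem with hmem | hmem
          · exact Or.inr (Or.inr ⟨rfl, ha, Or.inl ⟨h, Or.inl ⟨hmem, rfl⟩⟩⟩)
          · exact Or.inr (Or.inr ⟨rfl, ha, Or.inr ⟨h, Or.inr ⟨hmem, rfl⟩⟩⟩)
        · exact Or.inl ⟨ha, hb, h⟩

lemma fwd_bwd (hdisj : Disjoint H K) (hunion : H ∪ K = G.neighborSet v)
    {M' : (vertexSplit G v H K).Subgraph} (hM' : M'.IsPerfectMatching) :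
    fwd (bwd hunion M') = M' := by
  ext a b
  · exact ⟨fun _ => hM'.2 a, fun _ => Set.mem_univ a⟩
  · obtain ⟨b2, hb2, hu2⟩ := hM'.1 (hM'.2 (.inr 2))
    have hb2cases : b2 = .inr 0 ∨ b2 = .inr 1 := by
      rcases b2 with u | c
      · rcases adj_rl.mp (M'.adj_sub hb2) with ⟨-, h⟩ | ⟨-, h⟩ <;> exact absurd h (by decide)
      · rcases adj_rr.mp (M'.adj_sub hb2) with ⟨hne, ⟨-, (rfl | rfl)⟩ | ⟨h, -⟩⟩
        · exact Or.inl rfl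
        · exact Or.inr rfl
        · exact absurd h.symm hne
    rcases a with u | i <;> rcases b with w | j
    · -- inl / inl
      constructor
      · rintro (⟨ha', hb', h⟩ | ⟨heq, -⟩ | ⟨heq, -⟩)
        · exact h
        · exact absurd heq u.2
        · exact absurd heq w.2
      · intro h
        exact Or.inl ⟨u.2, w.2, h⟩
    · -- inl / inr
      constructor
      · rintro ⟨hbwd, hcond⟩
        have hadj : M'.Adj (.inl u) (.inr 0) ∨ M'.Adj (.inl u) (.inr 1) := by
          rcases hbwd with ⟨ha', hv, -⟩ | ⟨heq, -⟩ | ⟨-, hu', h⟩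
          · exact absurd rfl hv
          · exact absurd heq u.2
          · exact h
        rcases hcond with ⟨hH, rfl⟩ | ⟨hK, rfl⟩
        · rcases hadj with h0 | h1
          · exact h0
          · rcases adj_lr.mp (M'.adj_sub h1) with ⟨-, h⟩ | ⟨hK, -⟩
            · exact absurd h (by decide)
            · exact absurd hH (fun hh => hdisj.ne_of_mem hh hK rfl)
        · rcases hadj with h0 | h1
          · rcases adj_lr.mp (M'.adj_sub h0) with ⟨hH, -⟩ | ⟨-, h⟩
            · exact absurd hK (fun hh => hdisj.ne_of_mem hH hh rfl)
            · exact absurd h (by decide)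
          · exact h1
      · intro h
        refine ⟨Or.inr (Or.inr ⟨rfl, u.2, ?_⟩), adj_lr.mp (M'.adj_sub h)⟩
        rcases adj_lr.mp (M'.adj_sub h) with ⟨-, rfl⟩ | ⟨-, rfl⟩
        · exact Or.inl h
        · exact Or.inr h
    · -- inr / inl
      constructor
      · rintro ⟨hbwd, hcond⟩
        have hadj : M'.Adj (.inl w) (.inr 0) ∨ M'.Adj (.inl w) (.inr 1) := by
          rcases hbwd with ⟨ha', hv, -⟩ | ⟨heq, -⟩ | ⟨-, hw', h⟩
          · exact absurd rfl hv
          · exact absurd heq w.2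
          · exact h
        rcases hcond with ⟨hH, rfl⟩ | ⟨hK, rfl⟩
        · rcases hadj with h0 | h1
          · exact M'.adj_symm h0
          · rcases adj_lr.mp (M'.adj_sub h1) with ⟨-, h⟩ | ⟨hK, -⟩
            · exact absurd h (by decide)
            · exact absurd hH (fun hh => hdisj.ne_of_mem hh hK rfl)
        · rcases hadj with h0 | h1
          · rcases adj_lr.mp (M'.adj_sub h0) with ⟨hH, -⟩ | ⟨-, h⟩
            · exact absurd hK (fun hh => hdisj.ne_of_mem hH hh rfl)
            · exact absurd h (by decide)
          · exact M'.adj_symm h1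
      · intro h
        refine ⟨Or.inr (Or.inr ⟨rfl, w.2, ?_⟩), adj_rl.mp (M'.adj_sub h)⟩
        rcases adj_rl.mp (M'.adj_sub h) with ⟨-, rfl⟩ | ⟨-, rfl⟩
        · exact Or.inl (M'.adj_symm h)
        · exact Or.inr (M'.adj_symm h)
    · -- inr / inr
      obtain ⟨b0, hb0, hu0⟩ := hM'.1 (hM'.2 (.inr 0))
      obtain ⟨b1, hb1, hu1⟩ := hM'.1 (hM'.2 (.inr 1))
      constructor
      · rintro (⟨⟨u, huH, hadj⟩, hp⟩ | ⟨⟨u, huK, hadj⟩, hp⟩)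
        · -- u ∈ H matched to v, so inr 0 is matched to inl u, so x matched to inr 1
          have h0 : ∃ hu : u ≠ v, M'.Adj (.inl ⟨u, hu⟩) (.inr 0) := by
            rcases hadj with ⟨hv, -, -⟩ | ⟨-, hu, hh0 | hh1⟩ | ⟨-, hv, -⟩
            · exact absurd rfl hv
            · exact ⟨hu, hh0⟩
            · rcases adj_lr.mp (M'.adj_sub hh1) with ⟨-, h⟩ | ⟨hK, -⟩
              · exact absurd h (by decide)
              · exact absurd huH (fun hh => hdisj.ne_of_mem hh hK rfl)
            · exact absurd rfl hv
          obtain ⟨hu, h0⟩ := h0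
          have hx1 : M'.Adj (.inr 2) (.inr 1) := by
            rcases hb2cases with rfl | rfl
            · have e1 := hu0 _ (M'.adj_symm hb2)
              have e2 := hu0 _ (M'.adj_symm h0)
              exact absurd (e2.trans e1.symm) (by simp)
            · exact hb2
          rcases hp with ⟨rfl, rfl⟩ | ⟨rfl, rfl⟩
          · exact hx1
          · exact M'.adj_symm hx1
        · have h1 : ∃ hu : u ≠ v, M'.Adj (.inl ⟨u, hu⟩) (.inr 1) := by
            rcases hadj with ⟨hv, -, -⟩ | ⟨-, hu, hh0 | hh1⟩ | ⟨-, hv, -⟩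
            · exact absurd rfl hv
            · rcases adj_lr.mp (M'.adj_sub hh0) with ⟨hH, -⟩ | ⟨-, h⟩
              · exact absurd huK (fun hh => hdisj.ne_of_mem hH hh rfl)
              · exact absurd h (by decide)
            · exact ⟨hu, hh1⟩
            · exact absurd rfl hv
          obtain ⟨hu, h1⟩ := h1
          have hx0 : M'.Adj (.inr 2) (.inr 0) := by
            rcases hb2cases with rfl | rfl
            · exact hb2
            · have e1 := hu1 _ (M'.adj_symm hb2)
              have e2 := hu1 _ (M'.adj_symm h1)
              exact absurd (e2.trans e1.symm) (by simp)
          rcases hp with ⟨rfl, rfl⟩ | ⟨rfl, rfl⟩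
          · exact hx0
          · exact M'.adj_symm hx0
      · intro h
        rcases adj_rr.mp (M'.adj_sub h) with ⟨hne, ⟨hi, hj01⟩ | ⟨hj, hi01⟩⟩
        · subst hi
          rcases hj01 with rfl | rfl
          · -- x matched to inr 0, so inr 1 matched to some u ∈ K
            have hb1l : ∃ u : {u : V // u ≠ v}, M'.Adj (.inr 1) (.inl u) ∧ u.1 ∈ K := by
              rcases b1 with u | j'
              · rcases adj_rl.mp (M'.adj_sub hb1) with ⟨-, hh⟩ | ⟨hK, -⟩
                · exact absurd hh (by decide)
                · exact ⟨u, hb1, hK⟩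
              · rcases adj_rr.mp (M'.adj_sub hb1) with ⟨hne', ⟨hh, -⟩ | ⟨rfl, -⟩⟩
                · exact absurd hh (by decide)
                · exact absurd ((hu2 _ (M'.adj_symm hb1)).trans (hu2 _ h).symm) (by simp)
            obtain ⟨u, hadj1, huK⟩ := hb1l
            exact Or.inr ⟨⟨u.1, huK, Or.inr (Or.inl ⟨rfl, u.2, Or.inr (M'.adj_symm hadj1)⟩)⟩,
              Or.inl ⟨rfl, rfl⟩⟩
          · -- x matched to inr 1, so inr 0 matched to some u ∈ H
            have hb0l : ∃ u : {u : V // u ≠ v}, M'.Adj (.inr 0) (.inl u) ∧ u.1 ∈ H := by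
              rcases b0 with u | j'
              · rcases adj_rl.mp (M'.adj_sub hb0) with ⟨hH, -⟩ | ⟨-, hh⟩
                · exact ⟨u, hb0, hH⟩
                · exact absurd hh (by decide)
              · rcases adj_rr.mp (M'.adj_sub hb0) with ⟨hne', ⟨hh, -⟩ | ⟨rfl, -⟩⟩
                · exact absurd hh (by decide)
                · exact absurd ((hu2 _ (M'.adj_symm hb0)).trans (hu2 _ h).symm) (by simp)
            obtain ⟨u, hadj0, huH⟩ := hb0l
            exact Or.inl ⟨⟨u.1, huH, Or.inr (Or.inl ⟨rfl, u.2, Or.inl (M'.adj_symm hadj0)⟩)⟩,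
              Or.inl ⟨rfl, rfl⟩⟩
        · subst hj
          rcases hi01 with rfl | rfl
          ·
            have hb1l : ∃ u : {u : V // u ≠ v}, M'.Adj (.inr 1) (.inl u) ∧ u.1 ∈ K := by
              rcases b1 with u | j'
              · rcases adj_rl.mp (M'.adj_sub hb1) with ⟨-, hh⟩ | ⟨hK, -⟩
                · exact absurd hh (by decide)
                · exact ⟨u, hb1, hK⟩
              · rcases adj_rr.mp (M'.adj_sub hb1) with ⟨hne', ⟨hh, -⟩ | ⟨rfl, -⟩⟩
                · exact absurd hh (by decide)
                · exact absurd ((hu2 _ (M'.adj_symm hb1)).trans (hu2 _ (M'.adj_symm h)).symm) (by simp)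
            obtain ⟨u, hadj1, huK⟩ := hb1l
            exact Or.inr ⟨⟨u.1, huK, Or.inr (Or.inl ⟨rfl, u.2, Or.inr (M'.adj_symm hadj1)⟩)⟩,
              Or.inr ⟨rfl, rfl⟩⟩
          · have hb0l : ∃ u : {u : V // u ≠ v}, M'.Adj (.inr 0) (.inl u) ∧ u.1 ∈ H := by
              rcases b0 with u | j'
              · rcases adj_rl.mp (M'.adj_sub hb0) with ⟨hH, -⟩ | ⟨-, hh⟩
                · exact ⟨u, hb0, hH⟩
                · exact absurd hh (by decide)
              · rcases adj_rr.mp (M'.adj_sub hb0) with ⟨hne', ⟨hh, -⟩ | ⟨rfl, -⟩⟩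
                · exact absurd hh (by decide)
                · exact absurd ((hu2 _ (M'.adj_symm hb0)).trans (hu2 _ (M'.adj_symm h)).symm) (by simp)
            obtain ⟨u, hadj0, huH⟩ := hb0l
            exact Or.inl ⟨⟨u.1, huH, Or.inr (Or.inl ⟨rfl, u.2, Or.inl (M'.adj_symm hadj0)⟩)⟩,
              Or.inr ⟨rfl, rfl⟩⟩

end VSplit

/-- The Vertex-Splitting Lemma: if `N(v) = H ∪ K` is a disjoint union of the neighborhood of
`v`, then splitting `v` accordingly does not change the number of perfect matchings. -/
theorem vertex_splitting {V : Type*} (G : SimpleGraph V) (v : V) (H K : Set V)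
    (hdisj : Disjoint H K) (hunion : H ∪ K = G.neighborSet v) :
    numPM G = numPM (vertexSplit G v H K) := by
  have e : {M : G.Subgraph | M.IsPerfectMatching} ≃
      {M' : (vertexSplit G v H K).Subgraph | M'.IsPerfectMatching} :=
    { toFun := fun M => ⟨VSplit.fwd M.1, VSplit.fwd_pm hdisj hunion M.2⟩
      invFun := fun M' => ⟨VSplit.bwd hunion M'.1, VSplit.bwd_pm hdisj hunion M'.2⟩
      left_inv := fun M => Subtype.ext (VSplit.bwd_fwd hunion M.2)
      right_inv := fun M' => Subtype.ext (VSplit.fwd_bwd hdisj hunion M'.2) }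
  unfold numPM
  rw [← Nat.card_coe_set_eq, ← Nat.card_coe_set_eq]
  exact Nat.card_congr e
end

section
/- Graph Splitting Lemma (part a): Let G be a bipartite graph with vertex classes V1 and V2, and let H be an induced subgraph of G such that (i) no edge of G connects a vertex of V(H) ∩ V1 to a vertex of G − H, and (ii) |V(H) ∩ V1| = |V(H) ∩ V2|. Then M(G) = M(H)·M(G − H). -/
open scoped Classical

/-- Restriction of a subgraph of `G` to an induced subgraph on `S`. -/
def restrictSub {V : Type*} (G : SimpleGraph V) (S : Set V) (M : G.Subgraph) :
    (G.induce S).Subgraph where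
  verts := {a : S | (a : V) ∈ M.verts}
  Adj a b := M.Adj a b
  adj_sub h := M.adj_sub h
  edge_vert h := M.edge_vert h
  symm := ⟨fun a b h => M.adj_symm h⟩

/-- Join of a subgraph on `S` and a subgraph on `Sᶜ` into a subgraph of `G`. -/
def joinSub {V : Type*} (G : SimpleGraph V) (S : Set V)
    (M1 : (G.induce S).Subgraph) (M2 : (G.induce Sᶜ).Subgraph) : G.Subgraph where
  verts := ((↑) '' M1.verts) ∪ ((↑) '' M2.verts)
  Adj u v := (∃ (hu : u ∈ S) (hv : v ∈ S), M1.Adj ⟨u, hu⟩ ⟨v, hv⟩) ∨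
             (∃ (hu : u ∈ Sᶜ) (hv : v ∈ Sᶜ), M2.Adj ⟨u, hu⟩ ⟨v, hv⟩)
  adj_sub := by
    rintro u v (⟨hu, hv, h⟩ | ⟨hu, hv, h⟩)
    · exact M1.adj_sub h
    · exact M2.adj_sub h
  edge_vert := by
    rintro u v (⟨hu, hv, h⟩ | ⟨hu, hv, h⟩)
    · exact Or.inl ⟨⟨u, hu⟩, M1.edge_vert h, rfl⟩
    · exact Or.inr ⟨⟨u, hu⟩, M2.edge_vert h, rfl⟩
  symm := by
    constructor
    rintro u v (⟨hu, hv, h⟩ | ⟨hu, hv, h⟩)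
    · exact Or.inl ⟨hv, hu, M1.adj_symm h⟩
    · exact Or.inr ⟨hv, hu, M2.adj_symm h⟩

/-- In a perfect matching of a balanced separated bipartite situation,
matching edges never leave `S`. -/
lemma split_aux {V : Type*} [Fintype V] (G : SimpleGraph V) (V1 V2 : Set V)
    (hpart : ∀ v, (v ∈ V1 ∧ v ∉ V2) ∨ (v ∈ V2 ∧ v ∉ V1))
    (hbip : ∀ u v, G.Adj u v → (u ∈ V1 ↔ v ∈ V2))
    (S : Set V)
    (hsep : ∀ u v, G.Adj u v → u ∈ S ∩ V1 → v ∈ S)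
    (hbal : (S ∩ V1).ncard = (S ∩ V2).ncard)
    {M : G.Subgraph} (hM : M.IsPerfectMatching) :
    ∀ u v, M.Adj u v → u ∈ S → v ∈ S := by
  obtain ⟨hm, hs⟩ := hM
  have hpartner : ∀ v : V, ∃! w, M.Adj v w := fun v => hm (hs v)
  set f : V → V := fun v => (hpartner v).exists.choose with hf
  have hfadj : ∀ v, M.Adj v (f v) := fun v => (hpartner v).exists.choose_spec
  have huniq : ∀ v w, M.Adj v w → w = f v := fun v w h =>
    (hpartner v).unique h (hfadj v)
  have hmaps : ∀ u ∈ S ∩ V1, f u ∈ S ∩ V2 := by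
    intro u hu
    have hadj := M.adj_sub (hfadj u)
    exact ⟨hsep _ _ hadj hu, (hbip _ _ hadj).mp hu.2⟩
  have hinj : Set.InjOn f (S ∩ V1) := by
    intro a ha b hb hab
    have h1 : M.Adj (f a) a := M.adj_symm (hfadj a)
    have h2 : M.Adj (f a) b := hab ▸ M.adj_symm (hfadj b)
    exact (hpartner (f a)).unique h1 h2
  have himg : f '' (S ∩ V1) = S ∩ V2 := by
    apply Set.eq_of_subset_of_ncard_le
    · rintro _ ⟨u, hu, rfl⟩; exact hmaps u hu
    · rw [Set.ncard_image_of_injOn hinj, hbal]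
    · exact Set.toFinite _
  intro u v huv hu
  rcases hpart u with ⟨h1, _⟩ | ⟨h2, _⟩
  · exact hsep u v (M.adj_sub huv) ⟨hu, h1⟩
  · have hmem : u ∈ S ∩ V2 := ⟨hu, h2⟩
    rw [← himg] at hmem
    obtain ⟨a, ha, hfa⟩ := hmem
    have h2' : M.Adj u a := hfa ▸ M.adj_symm (hfadj a)
    have hva : v = a := by rw [huniq u v huv, ← huniq u a h2']
    exact hva ▸ ha.1

lemma restrict_pm {V : Type*} (G : SimpleGraph V) (S : Set V) (M : G.Subgraph)
    (hM : M.IsPerfectMatching) (hclosed : ∀ u v, M.Adj u v → u ∈ S → v ∈ S) :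
    (restrictSub G S M).IsPerfectMatching := by
  obtain ⟨hm, hs⟩ := hM
  constructor
  · intro a ha
    obtain ⟨w, hw, huw⟩ := hm (hs (a : V))
    have hwS : w ∈ S := hclosed _ _ hw a.2
    refine ⟨⟨w, hwS⟩, hw, ?_⟩
    intro b hb
    exact Subtype.ext (huw b hb)
  · intro a
    exact hs (a : V)

lemma join_pm {V : Type*} (G : SimpleGraph V) (S : Set V)
    (M1 : (G.induce S).Subgraph) (M2 : (G.induce Sᶜ).Subgraph)
    (h1 : M1.IsPerfectMatching) (h2 : M2.IsPerfectMatching) :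
    (joinSub G S M1 M2).IsPerfectMatching := by
  obtain ⟨hm1, hs1⟩ := h1
  obtain ⟨hm2, hs2⟩ := h2
  have hspan : (joinSub G S M1 M2).IsSpanning := by
    intro v
    by_cases hv : v ∈ S
    · exact Or.inl ⟨⟨v, hv⟩, hs1 _, rfl⟩
    · exact Or.inr ⟨⟨v, hv⟩, hs2 _, rfl⟩
  refine ⟨?_, hspan⟩
  intro v _
  by_cases hv : v ∈ S
  · obtain ⟨b, hb, hub⟩ := hm1 (hs1 ⟨v, hv⟩)
    refine ⟨(b : V), Or.inl ⟨hv, b.2, hb⟩, ?_⟩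
    rintro w (⟨hu', hw, h⟩ | ⟨hu', hw, h⟩)
    · have := hub ⟨w, hw⟩ h
      exact congrArg Subtype.val this
    · exact absurd hv hu'
  · obtain ⟨b, hb, hub⟩ := hm2 (hs2 ⟨v, hv⟩)
    refine ⟨(b : V), Or.inr ⟨hv, b.2, hb⟩, ?_⟩
    rintro w (⟨hu', hw, h⟩ | ⟨hu', hw, h⟩)
    · exact absurd hu' hv
    · have := hub ⟨w, hw⟩ h
      exact congrArg Subtype.val this

/-- The Graph Splitting Lemma, part (a): if `G` is bipartite with color classes `V1`, `V2`,
and the induced subgraph `H` on a vertex set `S` satisfies the separating condition (no edge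
of `G` joins a vertex of `S ∩ V1` to a vertex outside `S`) and the balancing condition
`|S ∩ V1| = |S ∩ V2|`, then `M(G) = M(H) · M(G − H)`. -/
theorem graph_splitting_a {V : Type*} [Fintype V] (G : SimpleGraph V) (V1 V2 : Set V)
    (hpart : ∀ v, (v ∈ V1 ∧ v ∉ V2) ∨ (v ∈ V2 ∧ v ∉ V1))
    (hbip : ∀ u v, G.Adj u v → (u ∈ V1 ↔ v ∈ V2))
    (S : Set V)
    (hsep : ∀ u v, G.Adj u v → u ∈ S ∩ V1 → v ∈ S)
    (hbal : (S ∩ V1).ncard = (S ∩ V2).ncard) :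
    numPM G = numPM (G.induce S) * numPM (G.induce Sᶜ) := by
  have key : ∀ {M : G.Subgraph}, M.IsPerfectMatching →
      ∀ u v, M.Adj u v → (u ∈ S ↔ v ∈ S) := by
    intro M hM u v huv
    constructor
    · exact split_aux G V1 V2 hpart hbip S hsep hbal hM u v huv
    · intro hv
      by_contra hu
      exact hu (split_aux G V1 V2 hpart hbip S hsep hbal hM v u (M.adj_symm huv) hv)
  have keyc : ∀ {M : G.Subgraph}, M.IsPerfectMatching →
      ∀ u v, M.Adj u v → u ∈ Sᶜ → v ∈ Sᶜ := by
    intro M hM u v huv hu hv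
    exact hu ((key hM u v huv).mpr hv)
  -- The equivalence
  let e : {M : G.Subgraph | M.IsPerfectMatching} ≃
      ({M : (G.induce S).Subgraph | M.IsPerfectMatching} ×
       {M : (G.induce Sᶜ).Subgraph | M.IsPerfectMatching}) :=
    { toFun := fun M =>
        (⟨restrictSub G S M.1, restrict_pm G S M.1 M.2
            (fun u v h hu => (key M.2 u v h).mp hu)⟩,
         ⟨restrictSub G Sᶜ M.1, restrict_pm G Sᶜ M.1 M.2 (keyc M.2)⟩)
      invFun := fun P => ⟨joinSub G S P.1.1 P.2.1, join_pm G S _ _ P.1.2 P.2.2⟩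
      left_inv := by
        rintro ⟨M, hM⟩
        apply Subtype.ext
        ext u v
        · constructor
          · rintro (⟨⟨a, ha, rfl⟩⟩ | ⟨⟨a, ha, rfl⟩⟩) <;> exact ha
          · intro hu
            by_cases huS : u ∈ S
            · exact Or.inl ⟨⟨u, huS⟩, hu, rfl⟩
            · exact Or.inr ⟨⟨u, huS⟩, hu, rfl⟩
        · constructor
          · rintro (⟨hu, hv, h⟩ | ⟨hu, hv, h⟩) <;> exact h
          · intro h
            by_cases huS : u ∈ S
            · exact Or.inl ⟨huS, (key hM u v h).mp huS, h⟩
            · exact Or.inr ⟨huS, keyc hM u v h huS, h⟩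
      right_inv := by
        rintro ⟨⟨M1, hM1⟩, ⟨M2, hM2⟩⟩
        refine Prod.ext (Subtype.ext ?_) (Subtype.ext ?_)
        · ext a b
          · simp only [restrictSub, joinSub, Set.mem_setOf_eq]
            constructor
            · intro _; exact hM1.2 a
            · intro _; exact Or.inl ⟨a, hM1.2 a, rfl⟩
          · show ((∃ (hu : (a:V) ∈ S) (hv : (b:V) ∈ S), M1.Adj ⟨a, hu⟩ ⟨b, hv⟩) ∨
              (∃ (hu : (a:V) ∈ Sᶜ) (hv : (b:V) ∈ Sᶜ), M2.Adj ⟨a, hu⟩ ⟨b, hv⟩)) ↔ M1.Adj a b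
            constructor
            · rintro (⟨hu, hv, h⟩ | ⟨hu, hv, h⟩)
              · exact h
              · exact absurd a.2 hu
            · intro h
              exact Or.inl ⟨a.2, b.2, h⟩
        · ext a b
          · simp only [restrictSub, joinSub, Set.mem_setOf_eq]
            constructor
            · intro _; exact hM2.2 a
            · intro _; exact Or.inr ⟨a, hM2.2 a, rfl⟩
          · show ((∃ (hu : (a:V) ∈ S) (hv : (b:V) ∈ S), M1.Adj ⟨a, hu⟩ ⟨b, hv⟩) ∨
              (∃ (hu : (a:V) ∈ Sᶜ) (hv : (b:V) ∈ Sᶜ), M2.Adj ⟨a, hu⟩ ⟨b, hv⟩)) ↔ M2.Adj a b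
            constructor
            · rintro (⟨hu, hv, h⟩ | ⟨hu, hv, h⟩)
              · exact absurd hu a.2
              · exact h
            · intro h
              exact Or.inr ⟨a.2, b.2, h⟩ }
  have h1 : numPM G = Nat.card {M : G.Subgraph | M.IsPerfectMatching} := rfl
  have h2 : numPM (G.induce S) =
      Nat.card {M : (G.induce S).Subgraph | M.IsPerfectMatching} := rfl
  have h3 : numPM (G.induce Sᶜ) =
      Nat.card {M : (G.induce Sᶜ).Subgraph | M.IsPerfectMatching} := rfl
  rw [h1, h2, h3, Nat.card_congr e, Nat.card_prod]
end
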